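/- arXiv:2411.13419 — 4 statements merged into one kernel-verified Lean document; each statement's English description precedes it below -/
import Mathlib

section
/- Let (Δ'_j)_{j≥1} be i.i.d. nonnegative real random variables on a probability space (Ω, F, P) with P(Δ'_1 > 0) > 0. Then there exist constants δ₁ > 0 and δ₂ > 0 such that P( for all n ≥ 1, Δ'_1 + Δ'_2 + ⋯ + Δ'_n ≥ n·δ₁ ) ≥ δ₂. -/
/-!
Truncating at level one gives bounded variables `min Δⱼ 1` with positive mean `m`, so the strong
law of large numbers yields, almost surely, `Δ₀ + ⋯ + Δₙ₋₁ ≥ n m / 2` for all large `n`. On the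
event `Δ₀ > 0` the partial sums are moreover all positive, so finitely many initial terms cannot
spoil a linear lower bound: almost every `ω` with `Δ₀ ω > 0` lies in the event of the theorem for
some `δ₁ = 1 / (k + 1)`, and one of these countably many events must have positive probability.
-/

open MeasureTheory ProbabilityTheory Filter ENNReal Finset

theorem exists_pos_forall_le_of_eventually_le {f : ℕ → ℝ} {a : ℝ} (hf : ∀ n, 0 < f n)
    (ha : 0 < a) (h : ∀ᶠ n in atTop, a ≤ f n) : ∃ δ, 0 < δ ∧ ∀ n, δ ≤ f n := by
  obtain ⟨K, hK⟩ := eventually_atTop.1 h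
  clear h
  induction K generalizing a with
  | zero => exact ⟨a, ha, fun n => hK n n.zero_le⟩
  | succ K ih =>
    refine ih (lt_min ha (hf K)) fun n hn => ?_
    rcases hn.eq_or_lt with rfl | hlt
    · exact min_le_right _ _
    · exact (min_le_left _ _).trans (hK n hlt)

theorem exists_pos_forall_mul_le_sum {x : ℕ → ℝ} {a : ℝ} (hx : ∀ i, 0 ≤ x i) (hx0 : 0 < x 0)
    (ha : 0 < a) (h : ∀ᶠ n in atTop, n * a ≤ ∑ i ∈ range n, x i) :
    ∃ δ, 0 < δ ∧ ∀ n : ℕ, 1 ≤ n → n * δ ≤ ∑ i ∈ range n, x i := by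
  have hsum_pos (n : ℕ) : 0 < ∑ i ∈ range (n + 1), x i :=
    hx0.trans_le (single_le_sum (fun i _ => hx i) (mem_range.2 n.succ_pos))
  obtain ⟨δ, hδ, hle⟩ := exists_pos_forall_le_of_eventually_le
    (f := fun n => (∑ i ∈ range (n + 1), x i) / (n + 1 : ℕ))
    (fun n => div_pos (hsum_pos n) (by positivity)) ha
    ((tendsto_add_atTop_nat 1).eventually h |>.mono fun n hn =>
      (le_div_iff₀ (by positivity)).2 (by rwa [mul_comm] at hn))
  refine ⟨δ, hδ, fun n hn => ?_⟩
  obtain ⟨k, rfl⟩ := Nat.exists_eq_add_of_le' hn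
  rw [mul_comm, ← le_div_iff₀ (by positivity)]
  exact hle k

section StrongLaw

variable {Ω : Type*} {mΩ : MeasurableSpace Ω} {μ : Measure Ω} [IsFiniteMeasure μ]

theorem integrable_min_one {X : Ω → ℝ} (hX : AEMeasurable X μ) (hnonneg : ∀ ω, 0 ≤ X ω) :
    Integrable (fun ω => min (X ω) 1) μ :=
  .of_bound (hX.min aemeasurable_const).aestronglyMeasurable 1 <| .of_forall fun ω => by
    rw [Real.norm_of_nonneg (le_min (hnonneg ω) zero_le_one)]
    exact min_le_right _ _

theorem integral_min_one_pos {X : Ω → ℝ} (hX : AEMeasurable X μ) (hnonneg : ∀ ω, 0 ≤ X ω)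
    (hpos : 0 < μ {ω | 0 < X ω}) : 0 < ∫ ω, min (X ω) 1 ∂μ := by
  rw [integral_pos_iff_support_of_nonneg (fun ω => le_min (hnonneg ω) zero_le_one)
    (integrable_min_one hX hnonneg)]
  refine hpos.trans_le (measure_mono fun ω (hω : 0 < X ω) => ?_)
  exact (lt_min hω one_pos).ne'

theorem ae_eventually_mul_le_sum {X : ℕ → Ω → ℝ}
    (hindep : Pairwise (Function.onFun (IndepFun · · μ) X)) (hident : ∀ i, IdentDistrib (X i) (X 0) μ μ)
    (hnonneg : ∀ i ω, 0 ≤ X i ω) (hpos : 0 < μ {ω | 0 < X 0 ω}) :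
    ∃ a, 0 < a ∧ ∀ᵐ ω ∂μ, ∀ᶠ n : ℕ in atTop, n * a ≤ ∑ i ∈ range n, X i ω := by
  set g : ℝ → ℝ := fun x => min x 1
  have hg : Measurable g := measurable_id.min measurable_const
  have hm := integral_min_one_pos (hident 0).aemeasurable_fst (hnonneg 0) hpos
  refine ⟨(∫ ω, g (X 0 ω) ∂μ) / 2, half_pos hm, ?_⟩
  have hslln := strong_law_ae_real (fun i => g ∘ X i)
    (integrable_min_one (hident 0).aemeasurable_fst (hnonneg 0))
    (fun i j hij => (hindep hij).comp hg hg) (fun i => (hident i).comp hg)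
  filter_upwards [hslln] with ω hω
  filter_upwards [hω.eventually (eventually_gt_nhds (half_lt_self hm)), eventually_gt_atTop 0]
    with n hn hn0
  calc n * ((∫ ω, g (X 0 ω) ∂μ) / 2) ≤ ∑ i ∈ range n, g (X i ω) := by
        rw [mul_comm]
        exact ((lt_div_iff₀ (Nat.cast_pos.2 hn0)).1 hn).le
    _ ≤ ∑ i ∈ range n, X i ω := sum_le_sum fun i _ => min_le_left _ _

end StrongLaw

theorem stmt_0_general {Ω : Type*} [MeasureSpace Ω] [IsProbabilityMeasure (ℙ : Measure Ω)]
    (Δ : ℕ → Ω → ℝ)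
    (hindep : iIndepFun Δ ℙ)
    (hident : ∀ j, IdentDistrib (Δ j) (Δ 0) ℙ ℙ)
    (hnonneg : ∀ j ω, 0 ≤ Δ j ω)
    (hpos : 0 < ℙ {ω | 0 < Δ 0 ω}) :
    ∃ δ₁ : ℝ, 0 < δ₁ ∧ ∃ δ₂ : ℝ≥0∞, 0 < δ₂ ∧
      δ₂ ≤ ℙ {ω | ∀ n : ℕ, 1 ≤ n → (n : ℝ) * δ₁ ≤ ∑ j ∈ Finset.range n, Δ j ω} := by
  obtain ⟨a, ha, hslln⟩ := ae_eventually_mul_le_sum (fun i j hij => hindep.indepFun hij)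
    hident hnonneg hpos
  set T : ℝ → Set Ω := fun δ => {ω | ∀ n : ℕ, 1 ≤ n → (n : ℝ) * δ ≤ ∑ j ∈ range n, Δ j ω}
  have hcover : {ω | 0 < Δ 0 ω} ≤ᵐ[ℙ] ⋃ k : ℕ, T (1 / (k + 1)) := by
    filter_upwards [hslln] with ω hω (hω0 : 0 < Δ 0 ω)
    obtain ⟨δ, hδ, hT⟩ := exists_pos_forall_mul_le_sum (hnonneg · ω) hω0 ha hω
    obtain ⟨k, hk⟩ := exists_nat_one_div_lt hδ
    exact Set.mem_iUnion.2
      ⟨k, fun n hn => (mul_le_mul_of_nonneg_left hk.le n.cast_nonneg).trans (hT n hn)⟩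
  obtain ⟨k, hk⟩ : ∃ k : ℕ, 0 < ℙ (T (1 / (k + 1))) := by
    by_contra! h
    exact hpos.ne' <| measure_mono_null_ae hcover <|
      measure_iUnion_null_iff.2 fun k => nonpos_iff_eq_zero.1 (h k)
  exact ⟨1 / (k + 1), by positivity, _, hk, le_rfl⟩

/-- Let `(Δ'_j)_{j≥1}` be i.i.d. nonnegative real random variables with
`P(Δ'_1 > 0) > 0`. Then there exist constants `δ₁ > 0` and `δ₂ > 0` such that
`P(∀ n ≥ 1, Δ'_1 + ⋯ + Δ'_n ≥ n·δ₁) ≥ δ₂`. -/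
theorem stmt_0 {Ω : Type*} [MeasureSpace Ω] [IsProbabilityMeasure (ℙ : Measure Ω)]
    (Δ : ℕ → Ω → ℝ)
    (hmeas : ∀ j, Measurable (Δ j))
    (hindep : iIndepFun Δ ℙ)
    (hident : ∀ j, IdentDistrib (Δ j) (Δ 0) ℙ ℙ)
    (hnonneg : ∀ j ω, 0 ≤ Δ j ω)
    (hpos : 0 < ℙ {ω | 0 < Δ 0 ω}) :
    ∃ δ₁ : ℝ, 0 < δ₁ ∧ ∃ δ₂ : ℝ≥0∞, 0 < δ₂ ∧
      δ₂ ≤ ℙ {ω | ∀ n : ℕ, 1 ≤ n → (n : ℝ) * δ₁ ≤ ∑ j ∈ Finset.range n, Δ j ω} :=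
  stmt_0_general Δ hindep hident hnonneg hpos
end

section
/- Let a > 0 and p ∈ (0,1], and let (Z_j)_{j≥1} be i.i.d. random variables with P(Z_j = a) = p and P(Z_j = 0) = 1 − p. Then P( for all n ≥ 1, Z_1 + ⋯ + Z_n ≥ n·(a·p/2) ) > 0. -/
/-!
By the strong law of large numbers `(Z 0 + ⋯ + Z (n-1)) / n → a p` almost surely, so for some `K`
the event that the partial sums exceed `n · a p / 2` for all `n ≥ K` has positive probability.
Since `Z j ≤ a` almost surely, this event lies (up to a null set) in the tail event `T` that
`Z K + ⋯ + Z (n-1) ≥ n · a p / 2 - K a` for all `n ≥ K`. The event `D` that `Z 0 = ⋯ = Z (K-1) = a`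
has probability `p ^ K > 0` and is independent of `T`; on `D ∩ T` the bound holds for every `n`,
for `n ≤ K` because there the partial sum is `n a ≥ n · a p / 2`.
-/

open MeasureTheory ProbabilityTheory Filter ENNReal

section

variable {Ω β : Type*} {mΩ : MeasurableSpace Ω} {μ : Measure Ω}

lemma ae_eq_or_eq_of_measure_add_eq_one [IsProbabilityMeasure μ] [MeasurableSpace β]
    [MeasurableSingletonClass β] {X : Ω → β} (hX : Measurable X) {a b : β} (hab : a ≠ b)
    (h : μ {ω | X ω = a} + μ {ω | X ω = b} = 1) : ∀ᵐ ω ∂μ, X ω = a ∨ X ω = b := by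
  have hXa : MeasurableSet {ω | X ω = a} := hX (measurableSet_singleton a)
  have hXb : MeasurableSet {ω | X ω = b} := hX (measurableSet_singleton b)
  have hunion : μ ({ω | X ω = a} ∪ {ω | X ω = b}) = 1 := by
    rw [measure_union _ hXb, h]
    exact Set.disjoint_left.2 fun ω (hωa : X ω = a) (hωb : X ω = b) => hab (hωa ▸ hωb)
  exact (prob_compl_eq_zero_iff (hXa.union hXb)).2 hunion

lemma ae_eq_indicator_of_ae_eq_or_eq_zero [Zero β] {X : Ω → β} {a : β}
    (h : ∀ᵐ ω ∂μ, X ω = a ∨ X ω = 0) : X =ᵐ[μ] {ω | X ω = a}.indicator fun _ => a := by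
  filter_upwards [h] with ω hω
  by_cases hωa : X ω = a
  · simp [hωa]
  · rw [hω.resolve_left hωa, Set.indicator_of_notMem (s := {ω | X ω = a}) hωa]

lemma integrable_of_ae_eq_or_eq_zero [IsFiniteMeasure μ] {X : Ω → ℝ} (hX : Measurable X)
    {a : ℝ} (h : ∀ᵐ ω ∂μ, X ω = a ∨ X ω = 0) : Integrable X μ :=
  ((integrable_const a).indicator (hX (measurableSet_singleton a))).congr
    (ae_eq_indicator_of_ae_eq_or_eq_zero h).symm

lemma integral_eq_of_ae_eq_or_eq_zero {X : Ω → ℝ} (hX : Measurable X) {a : ℝ}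
    (h : ∀ᵐ ω ∂μ, X ω = a ∨ X ω = 0) : μ[X] = μ.real {ω | X ω = a} * a := by
  have hXa : MeasurableSet {ω | X ω = a} := hX (measurableSet_singleton a)
  rw [integral_congr_ae (ae_eq_indicator_of_ae_eq_or_eq_zero h), integral_indicator_const a hXa,
    smul_eq_mul]

namespace ProbabilityTheory

lemma iIndepFun.measure_forall_lt_eq_pow [MeasurableSpace β] [MeasurableSingletonClass β]
    {Z : ℕ → Ω → β} (hindep : iIndepFun Z μ) {a : β} {q : ℝ≥0∞}
    (hq : ∀ j, μ {ω | Z j ω = a} = q) (K : ℕ) : μ {ω | ∀ j < K, Z j ω = a} = q ^ K := by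
  have hset : {ω | ∀ j < K, Z j ω = a} = ⋂ j ∈ Finset.range K, Z j ⁻¹' {a} := by
    ext ω; simp
  rw [hset, hindep.meas_biInter fun j _ => ⟨{a}, measurableSet_singleton a, rfl⟩]
  simp only [Set.preimage, Set.mem_singleton_iff, hq, Finset.prod_const, Finset.card_range]

lemma iIndepFun.indep_iSup_comap_of_disjoint [IsProbabilityMeasure μ] {ι : Type*}
    {mβ : MeasurableSpace β} {Z : ι → Ω → β} (hmeas : ∀ i, Measurable (Z i)) (hindep : iIndepFun Z μ)
    {S T : Set ι} (hST : Disjoint S T) :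
    Indep (⨆ i ∈ S, MeasurableSpace.comap (Z i) mβ) (⨆ i ∈ T, MeasurableSpace.comap (Z i) mβ)
      μ :=
  indep_iSup_of_disjoint (fun i => (hmeas i).comap_le) hindep.iIndep hST

end ProbabilityTheory

lemma measurable_iSup_comap_of_mem {ι : Type*} {mβ : MeasurableSpace β} {Z : ι → Ω → β} {S : Set ι}
    {j : ι} (hj : j ∈ S) : Measurable[⨆ i ∈ S, MeasurableSpace.comap (Z i) mβ] (Z j) :=
  (comap_measurable (Z j)).mono
    (le_iSup₂ (f := fun i (_ : i ∈ S) => MeasurableSpace.comap (Z i) mβ) j hj) le_rfl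

lemma measurableSet_iSup_comap_Iio_forall_eq {mβ : MeasurableSpace β}
    [MeasurableSingletonClass β] (Z : ℕ → Ω → β) (K : ℕ) (a : β) :
    MeasurableSet[⨆ i ∈ Set.Iio K, MeasurableSpace.comap (Z i) mβ] {ω | ∀ j < K, Z j ω = a} := by
  have hset : {ω | ∀ j < K, Z j ω = a} = ⋂ j, ⋂ (_ : j < K), Z j ⁻¹' {a} := by ext; simp
  rw [hset]
  exact .iInter fun j => .iInter fun hj =>
    measurable_iSup_comap_of_mem (Set.mem_Iio.2 hj) (measurableSet_singleton a)

lemma measurableSet_iSup_comap_Ici_forall_le_sum (Z : ℕ → Ω → ℝ) (K : ℕ) (b : ℕ → ℝ) :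
    MeasurableSet[⨆ i ∈ Set.Ici K, MeasurableSpace.comap (Z i) Real.measurableSpace]
      {ω | ∀ n, K ≤ n → b n ≤ ∑ j ∈ Finset.Ico K n, Z j ω} := by
  have hset : {ω | ∀ n, K ≤ n → b n ≤ ∑ j ∈ Finset.Ico K n, Z j ω} =
      ⋂ n, ⋂ (_ : K ≤ n), {ω | b n ≤ ∑ j ∈ Finset.Ico K n, Z j ω} := by ext; simp
  rw [hset]
  exact .iInter fun n => .iInter fun _ => measurableSet_le measurable_const
    (Finset.measurable_sum _ fun j hj => measurable_iSup_comap_of_mem (Finset.mem_Ico.1 hj).1)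

lemma exists_measure_pos_forall_le_sum [NeZero μ] {Z : ℕ → Ω → ℝ}
    (hint : Integrable (Z 0) μ) (hindep : Pairwise fun i j => IndepFun (Z i) (Z j) μ)
    (hident : ∀ i, IdentDistrib (Z i) (Z 0) μ μ) {c : ℝ} (hc : c < μ[Z 0]) :
    ∃ K, 0 < μ {ω | ∀ n, K ≤ n → n * c ≤ ∑ j ∈ Finset.range n, Z j ω} := by
  have hevent : ∀ᵐ ω ∂μ, ∃ K, ∀ n, K ≤ n → n * c ≤ ∑ j ∈ Finset.range n, Z j ω := by
    filter_upwards [strong_law_ae_real Z hint hindep hident] with ω hω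
    obtain ⟨K, hK⟩ := eventually_atTop.1
      ((hω.eventually (eventually_gt_nhds hc)).and (eventually_gt_atTop 0))
    refine ⟨K, fun n hn => ?_⟩
    obtain ⟨hlt, hnpos⟩ := hK n hn
    exact (mul_comm c n ▸ (lt_div_iff₀ (Nat.cast_pos.2 hnpos)).1 hlt).le
  by_contra! hnull
  have hnone : ∀ᵐ ω ∂μ, ∀ K, ¬ ∀ n, K ≤ n → n * c ≤ ∑ j ∈ Finset.range n, Z j ω :=
    ae_all_iff.2 fun K => measure_eq_zero_iff_ae_notMem.1 (nonpos_iff_eq_zero.1 (hnull K))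
  obtain ⟨ω, ⟨K, hK⟩, hω⟩ := (hevent.and hnone).exists
  exact hω K hK

end

lemma sub_le_sum_Ico_of_le_sum_range {x : ℕ → ℝ} {a c : ℝ} {K : ℕ} (hx : ∀ j < K, x j ≤ a)
    (h : ∀ n, K ≤ n → n * c ≤ ∑ j ∈ Finset.range n, x j) (n : ℕ) (hn : K ≤ n) :
    n * c - K * a ≤ ∑ j ∈ Finset.Ico K n, x j := by
  have hhead : ∑ j ∈ Finset.range K, x j ≤ K * a := by
    simpa using Finset.sum_le_sum fun j hj => hx j (Finset.mem_range.1 hj)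
  linarith [h n hn, Finset.sum_range_add_sum_Ico x hn]

lemma le_sum_range_of_eq_of_sub_le_sum_Ico {x : ℕ → ℝ} {a c : ℝ} {K : ℕ} (hca : c ≤ a)
    (hhead : ∀ j < K, x j = a) (htail : ∀ n, K ≤ n → n * c - K * a ≤ ∑ j ∈ Finset.Ico K n, x j)
    (n : ℕ) : n * c ≤ ∑ j ∈ Finset.range n, x j := by
  have hsum : ∀ m ≤ K, ∑ j ∈ Finset.range m, x j = m * a := fun m hm => by
    rw [Finset.sum_congr rfl fun j hj => hhead j ((Finset.mem_range.1 hj).trans_le hm)]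
    simp
  rcases le_total n K with hnK | hKn
  · rw [hsum n hnK]
    exact mul_le_mul_of_nonneg_left hca n.cast_nonneg
  · rw [← Finset.sum_range_add_sum_Ico x hKn, hsum K le_rfl]
    linarith [htail n hKn]

/-- Let `a > 0`, `p ∈ (0,1]`, and `(Z_j)_{j≥1}` i.i.d. with `P(Z_j = a) = p` and
`P(Z_j = 0) = 1 − p`. Then `P(∀ n ≥ 1, Z_1 + ⋯ + Z_n ≥ n·(a·p/2)) > 0`. -/
theorem stmt_1 {Ω : Type*} [MeasureSpace Ω] [IsProbabilityMeasure (ℙ : Measure Ω)]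
    (a p : ℝ) (ha : 0 < a) (hp : p ∈ Set.Ioc (0 : ℝ) 1)
    (Z : ℕ → Ω → ℝ)
    (hmeas : ∀ j, Measurable (Z j))
    (hindep : iIndepFun Z ℙ)
    (hident : ∀ j, IdentDistrib (Z j) (Z 0) ℙ ℙ)
    (hZa : ∀ j, ℙ {ω | Z j ω = a} = ENNReal.ofReal p)
    (hZ0 : ∀ j, ℙ {ω | Z j ω = 0} = ENNReal.ofReal (1 - p)) :
    0 < ℙ {ω | ∀ n : ℕ, 1 ≤ n → (n : ℝ) * (a * p / 2) ≤ ∑ j ∈ Finset.range n, Z j ω} := by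
  obtain ⟨hp0, hp1⟩ := hp
  have hvals : ∀ j, ∀ᵐ ω, Z j ω = a ∨ Z j ω = 0 := fun j =>
    ae_eq_or_eq_of_measure_add_eq_one (hmeas j) ha.ne' <| by
      rw [hZa, hZ0, ← ofReal_add hp0.le (by linarith)]; simp
  have hmean : ℙ[Z 0] = p * a := by
    rw [integral_eq_of_ae_eq_or_eq_zero (hmeas 0) (hvals 0), measureReal_def, hZa,
      toReal_ofReal hp0.le]
  obtain ⟨K, hK⟩ := exists_measure_pos_forall_le_sum (c := a * p / 2)
    (integrable_of_ae_eq_or_eq_zero (hmeas 0) (hvals 0))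
    (fun i j hij => hindep.indepFun hij) hident (by rw [hmean]; nlinarith [mul_pos ha hp0])
  set D := {ω | ∀ j < K, Z j ω = a}
  set T := {ω | ∀ n, K ≤ n → n * (a * p / 2) - K * a ≤ ∑ j ∈ Finset.Ico K n, Z j ω}
  have hD : 0 < ℙ D := by
    rw [hindep.measure_forall_lt_eq_pow hZa K]
    exact ENNReal.pow_pos (ofReal_pos.2 hp0) K
  have hT : 0 < ℙ T := by
    refine hK.trans_le (measure_mono_ae ?_)
    filter_upwards [ae_all_iff.2 hvals] with ω hω
    exact sub_le_sum_Ico_of_le_sum_range fun j _ => (hω j).elim le_of_eq fun h => h ▸ ha.le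
  have hDT : ℙ (D ∩ T) = ℙ D * ℙ T :=
    (Indep_iff _ _ _).1 (hindep.indep_iSup_comap_of_disjoint hmeas
      (Set.Iio_disjoint_Ici (le_refl K))) D T (measurableSet_iSup_comap_Iio_forall_eq Z K a)
      (measurableSet_iSup_comap_Ici_forall_le_sum Z K _)
  calc 0 < ℙ D * ℙ T := ENNReal.mul_pos hD.ne' hT.ne'
    _ = ℙ (D ∩ T) := hDT.symm
    _ ≤ _ := by
      refine measure_mono fun ω ⟨hωD, hωT⟩ n _ => ?_
      exact le_sum_range_of_eq_of_sub_le_sum_Ico (by nlinarith) hωD hωT n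
end

section
/- Let (Δ_j)_{j≥1} be i.i.d. nonnegative real random variables with P(Δ_1 > 0) > 0. Then there exist constants ε₀ > 0 and δ₂ > 0 such that P( ∏_{i=1}^∞ (1 − exp(−(Δ_1 + Δ_2 + ⋯ + Δ_i))) ≥ ε₀ ) ≥ δ₂. -/
/-!
With `S_i = Δ_1 + ⋯ + Δ_i`, the strong law of large numbers applied to the bounded variables
`min Δ_j 1` gives `S_i ≥ c i` eventually, almost surely, for some `c > 0`. Hence
`∑ exp (-S_i)` converges, and on `{Δ_1 > 0}` every factor `1 - exp (-S_i)` is positive, so the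
infinite product converges to a positive limit. Since `{Δ_1 > 0}` has positive probability, so
does `{product ≥ 1 / (n + 1)}` for some `n`.
-/

open MeasureTheory ProbabilityTheory Filter ENNReal Finset

theorem Real.exists_pos_tendsto_prod_range_one_sub {f : ℕ → ℝ} (hf1 : ∀ i, f i < 1)
    (hf : Summable f) :
    ∃ L, 0 < L ∧ Tendsto (fun N ↦ ∏ i ∈ range N, (1 - f i)) atTop (nhds L) := by
  have hlog : Summable fun i ↦ Real.log (1 - f i) := by
    simpa only [sub_eq_add_neg] using Real.summable_log_one_add_of_summable hf.neg
  exact ⟨_, Real.exp_pos _,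
    (Real.hasProd_of_hasSum_log (fun i ↦ sub_pos.2 (hf1 i)) hlog.hasSum).tendsto_prod_nat⟩

theorem Real.summable_exp_neg_of_eventually_mul_le {a : ℕ → ℝ} {c : ℝ} (hc : 0 < c)
    (ha : ∀ᶠ n in atTop, c * n ≤ a n) : Summable fun n ↦ Real.exp (-a n) := by
  refine (summable_geometric_of_lt_one (Real.exp_pos (-c)).le
    (Real.exp_lt_one_iff.2 (neg_lt_zero.2 hc))).of_norm_bounded_eventually_nat ?_
  filter_upwards [ha] with n hn
  rw [Real.norm_of_nonneg (Real.exp_pos _).le, ← Real.exp_nat_mul]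
  exact Real.exp_le_exp.2 (by linarith)

theorem eventually_mul_le_of_tendsto_div {a : ℕ → ℝ} {c μ : ℝ} (hcμ : c < μ)
    (ha : Tendsto (fun n ↦ a n / n) atTop (nhds μ)) : ∀ᶠ n in atTop, c * n ≤ a n := by
  filter_upwards [ha.eventually_const_lt hcμ, eventually_gt_atTop 0] with n hn hn0
  rw [lt_div_iff₀ (Nat.cast_pos.2 hn0)] at hn
  exact hn.le

section

variable {Ω : Type*} {m : MeasurableSpace Ω} {μ : Measure Ω}

theorem exists_pos_ae_eventually_mul_le_sum_range [IsFiniteMeasure μ] {Δ : ℕ → Ω → ℝ}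
    (hindep : iIndepFun Δ μ) (hident : ∀ j, IdentDistrib (Δ j) (Δ 0) μ μ)
    (hnonneg : ∀ ω, 0 ≤ Δ 0 ω) (hpos : 0 < μ {ω | 0 < Δ 0 ω}) :
    ∃ c > 0, ∀ᵐ ω ∂μ, ∀ᶠ n in atTop, c * n ≤ ∑ j ∈ range n, Δ j ω := by
  set Y : ℕ → Ω → ℝ := fun j ω ↦ min (Δ j ω) 1
  have hmin : Measurable fun x : ℝ ↦ min x 1 := measurable_id.min measurable_const
  have hYindep : iIndepFun Y μ := hindep.comp (fun _ x ↦ min x 1) fun _ ↦ hmin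
  have hYident : ∀ j, IdentDistrib (Y j) (Y 0) μ μ := fun j ↦ (hident j).comp hmin
  have hY0 : ∀ ω, 0 ≤ Y 0 ω := fun ω ↦ le_min (hnonneg ω) zero_le_one
  have hYint : Integrable (Y 0) μ := by
    refine .of_bound ((hident 0).aemeasurable_fst.min aemeasurable_const).aestronglyMeasurable 1
      (ae_of_all _ fun ω ↦ ?_)
    rw [Real.norm_of_nonneg (hY0 ω)]
    exact min_le_right _ _
  have hmean : 0 < ∫ ω, Y 0 ω ∂μ := by
    rw [integral_pos_iff_support_of_nonneg hY0 hYint]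
    exact hpos.trans_le (measure_mono fun ω hω ↦ (lt_min hω one_pos).ne')
  refine ⟨_, half_pos hmean, ?_⟩
  filter_upwards [strong_law_ae_real Y hYint (fun i j hij ↦ hYindep.indepFun hij) hYident]
    with ω hω
  filter_upwards [eventually_mul_le_of_tendsto_div (half_lt_self hmean) hω] with n hn
  exact hn.trans (sum_le_sum fun j _ ↦ min_le_left _ _)

theorem exists_pos_measure_setOf_of_ae_exists_pos {p : ℝ → Ω → Prop}
    (hp : ∀ ω, Antitone (p · ω)) {s : Set Ω} (hs : 0 < μ s)
    (h : ∀ᵐ ω ∂μ, ω ∈ s → ∃ ε > 0, p ε ω) : ∃ ε > 0, 0 < μ {ω | p ε ω} := by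
  have hcover : s ≤ᵐ[μ] ⋃ n : ℕ, {ω | p (1 / (n + 1)) ω} := by
    filter_upwards [h] with ω hω hωs
    obtain ⟨ε, hε, hpε⟩ := hω hωs
    obtain ⟨n, hn⟩ := exists_nat_one_div_lt hε
    exact Set.mem_iUnion.2 ⟨n, hp ω hn.le hpε⟩
  by_contra! hnull
  exact hs.ne' <| measure_mono_null_ae hcover <| measure_iUnion_null fun n ↦
    nonpos_iff_eq_zero.1 (hnull _ Nat.one_div_pos_of_nat)

end

theorem stmt_4_general {Ω : Type*} [MeasureSpace Ω] [IsProbabilityMeasure (ℙ : Measure Ω)]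
    (Δ : ℕ → Ω → ℝ)
    (hindep : iIndepFun Δ ℙ)
    (hident : ∀ j, IdentDistrib (Δ j) (Δ 0) ℙ ℙ)
    (hnonneg : ∀ j ω, 0 ≤ Δ j ω)
    (hpos : 0 < ℙ {ω | 0 < Δ 0 ω}) :
    ∃ ε₀ : ℝ, 0 < ε₀ ∧ ∃ δ₂ : ℝ≥0∞, 0 < δ₂ ∧
      δ₂ ≤ ℙ {ω | ∃ L : ℝ, ε₀ ≤ L ∧
        Tendsto (fun N : ℕ =>
            ∏ i ∈ Finset.range N,
              (1 - Real.exp (-(∑ j ∈ Finset.range (i + 1), Δ j ω))))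
          atTop (nhds L)} := by
  obtain ⟨c, hc, hlinear⟩ :=
    exists_pos_ae_eventually_mul_le_sum_range hindep hident (hnonneg 0) hpos
  have hlimit : ∀ᵐ ω, ω ∈ {ω | 0 < Δ 0 ω} → ∃ ε > 0, ∃ L : ℝ, ε ≤ L ∧
      Tendsto (fun N : ℕ ↦ ∏ i ∈ range N, (1 - Real.exp (-(∑ j ∈ range (i + 1), Δ j ω))))
        atTop (nhds L) := by
    filter_upwards [hlinear] with ω hω hΔ0
    have hsum_pos : ∀ i, 0 < ∑ j ∈ range (i + 1), Δ j ω := fun i ↦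
      hΔ0.trans_le <| single_le_sum (fun j _ ↦ hnonneg j ω) (mem_range.2 i.succ_pos)
    obtain ⟨L, hL, hT⟩ := Real.exists_pos_tendsto_prod_range_one_sub
      (fun i ↦ Real.exp_lt_one_iff.2 (neg_lt_zero.2 (hsum_pos i)))
      ((summable_nat_add_iff 1).2 (Real.summable_exp_neg_of_eventually_mul_le hc hω))
    exact ⟨L, hL, L, le_rfl, hT⟩
  obtain ⟨ε, hε, hprob⟩ := exists_pos_measure_setOf_of_ae_exists_pos
    (fun ω _ _ hεε' ⟨L, hL, hT⟩ ↦ ⟨L, hεε'.trans hL, hT⟩) hpos hlimit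
  exact ⟨ε, hε, _, hprob, le_rfl⟩

/-- Let `(Δ_j)_{j≥1}` be i.i.d. nonnegative real random variables with `P(Δ_1 > 0) > 0`.
Then there exist `ε₀ > 0` and `δ₂ > 0` such that
`P(∏_{i=1}^∞ (1 − exp(−(Δ_1 + ⋯ + Δ_i))) ≥ ε₀) ≥ δ₂`, where the infinite product is
the pointwise limit of the partial products. -/
theorem stmt_4 {Ω : Type*} [MeasureSpace Ω] [IsProbabilityMeasure (ℙ : Measure Ω)]
    (Δ : ℕ → Ω → ℝ)
    (hmeas : ∀ j, Measurable (Δ j))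
    (hindep : iIndepFun Δ ℙ)
    (hident : ∀ j, IdentDistrib (Δ j) (Δ 0) ℙ ℙ)
    (hnonneg : ∀ j ω, 0 ≤ Δ j ω)
    (hpos : 0 < ℙ {ω | 0 < Δ 0 ω}) :
    ∃ ε₀ : ℝ, 0 < ε₀ ∧ ∃ δ₂ : ℝ≥0∞, 0 < δ₂ ∧
      δ₂ ≤ ℙ {ω | ∃ L : ℝ, ε₀ ≤ L ∧
        Tendsto (fun N : ℕ =>
            ∏ i ∈ Finset.range N,
              (1 - Real.exp (-(∑ j ∈ Finset.range (i + 1), Δ j ω))))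
          atTop (nhds L)} :=
  stmt_4_general Δ hindep hident hnonneg hpos
end

section
/- Let a > 0, set μ = e^a − 1, and let ξ be a real random variable with the exponential distribution of rate 1. Then 1 − 1/(2μ) ≤ E[ ∏_{x=1}^∞ (1 − e^{−ξ − a x}) ] ≤ μ·(1 − e^{−1/μ}). -/
open MeasureTheory ProbabilityTheory Filter ENNReal Topology

/-!
With `U = e^{-ξ}`, which is uniform on `(0, 1]`, the integrand is `∏_{x ≥ 1} (1 - U e^{-a x})`.
Since `∑_{x ≥ 1} e^{-a x} = 1/μ`, the Weierstrass product inequality `1 - ∑ vₓ ≤ ∏ (1 - vₓ)` and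
`1 - v ≤ e^{-v}` trap this product between `1 - U/μ` and `e^{-U/μ}`; integrating these bounds over
`(0, 1]` gives `1 - 1/(2μ)` and `μ(1 - e^{-1/μ})`.
-/

section PartialProducts

variable {v : ℕ → ℝ} {S : ℝ}

theorem one_sub_sum_le_prod_one_sub {ι : Type*} (s : Finset ι) {w : ι → ℝ}
    (h0 : ∀ i ∈ s, 0 ≤ w i) (h1 : ∀ i ∈ s, w i ≤ 1) :
    1 - ∑ i ∈ s, w i ≤ ∏ i ∈ s, (1 - w i) := by
  classical
  induction s using Finset.induction_on with
  | empty => simp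
  | insert j s hj ih =>
    rw [Finset.sum_insert hj, Finset.prod_insert hj]
    have hw0 := h0 j (s.mem_insert_self j)
    have hw1 := h1 j (s.mem_insert_self j)
    have ih := ih (fun i hi => h0 i (Finset.mem_insert_of_mem hi))
      (fun i hi => h1 i (Finset.mem_insert_of_mem hi))
    have hsum : 0 ≤ ∑ i ∈ s, w i := Finset.sum_nonneg fun i hi => h0 i (Finset.mem_insert_of_mem hi)
    nlinarith [mul_le_mul_of_nonneg_left ih (sub_nonneg.2 hw1)]

theorem prod_one_sub_le_exp_neg_sum {ι : Type*} (s : Finset ι) {w : ι → ℝ}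
    (h1 : ∀ i ∈ s, w i ≤ 1) :
    ∏ i ∈ s, (1 - w i) ≤ Real.exp (-∑ i ∈ s, w i) := by
  rw [← Finset.sum_neg_distrib, Real.exp_sum]
  exact Finset.prod_le_prod (fun i hi => sub_nonneg.2 (h1 i hi))
    fun i _ => by linarith [Real.add_one_le_exp (-w i)]

theorem bddBelow_range_prod_Icc_one_sub (h1 : ∀ x, v x ≤ 1) :
    BddBelow (Set.range fun N : ℕ => ∏ x ∈ Finset.Icc 1 N, (1 - v x)) :=
  ⟨0, Set.forall_mem_range.2 fun _ => Finset.prod_nonneg fun x _ => sub_nonneg.2 (h1 x)⟩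

theorem one_sub_le_iInf_prod_Icc_one_sub (h0 : ∀ x, 0 ≤ v x) (h1 : ∀ x, v x ≤ 1)
    (hS : Tendsto (fun N => ∑ x ∈ Finset.Icc 1 N, v x) atTop (𝓝 S)) :
    1 - S ≤ ⨅ N : ℕ, ∏ x ∈ Finset.Icc 1 N, (1 - v x) := by
  have hmono : Monotone fun N => ∑ x ∈ Finset.Icc 1 N, v x := fun M N hMN =>
    Finset.sum_le_sum_of_subset_of_nonneg (Finset.Icc_subset_Icc_right hMN) fun x _ _ => h0 x
  refine le_ciInf fun N => ?_
  calc 1 - S ≤ 1 - ∑ x ∈ Finset.Icc 1 N, v x := by linarith [hmono.ge_of_tendsto hS N]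
    _ ≤ _ := one_sub_sum_le_prod_one_sub _ (fun x _ => h0 x) fun x _ => h1 x

theorem iInf_prod_Icc_one_sub_le_exp_neg (h1 : ∀ x, v x ≤ 1)
    (hS : Tendsto (fun N => ∑ x ∈ Finset.Icc 1 N, v x) atTop (𝓝 S)) :
    ⨅ N : ℕ, ∏ x ∈ Finset.Icc 1 N, (1 - v x) ≤ Real.exp (-S) :=
  ge_of_tendsto ((Real.continuous_exp.tendsto _).comp hS.neg) <| Eventually.of_forall fun N =>
    (ciInf_le (bddBelow_range_prod_Icc_one_sub h1) N).trans
      (prod_one_sub_le_exp_neg_sum _ fun x _ => h1 x)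

theorem tendsto_sum_Icc_one_of_hasSum (hS : HasSum (fun k => v (k + 1)) S) :
    Tendsto (fun N => ∑ x ∈ Finset.Icc 1 N, v x) atTop (𝓝 S) := by
  refine hS.tendsto_sum_nat.congr fun N => ?_
  rw [← Finset.Ico_add_one_right_eq_Icc, Finset.sum_Ico_eq_sum_range, Nat.add_sub_cancel]
  simp only [add_comm]

end PartialProducts

theorem hasSum_exp_neg_mul_succ {a : ℝ} (ha : 0 < a) :
    HasSum (fun k : ℕ => Real.exp (-(a * (k + 1 : ℕ)))) (Real.exp a - 1)⁻¹ := by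
  have hr1 : Real.exp (-a) < 1 := Real.exp_lt_one_iff.2 (neg_lt_zero.2 ha)
  have hterm : (fun k : ℕ => Real.exp (-(a * (k + 1 : ℕ)))) =
      fun k => Real.exp (-a) * Real.exp (-a) ^ k := funext fun k => by
    rw [← pow_succ', ← Real.exp_nat_mul]
    ring_nf
  have hsum : (Real.exp a - 1)⁻¹ = Real.exp (-a) * (1 - Real.exp (-a))⁻¹ := by
    have : Real.exp a - 1 ≠ 0 := (sub_pos.2 (Real.one_lt_exp_iff.2 ha)).ne'
    rw [Real.exp_neg]
    field_simp
  rw [hterm, hsum]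
  exact (hasSum_geometric_of_lt_one (Real.exp_pos _).le hr1).mul_left _

section ExponentialLaw

variable {Ω : Type*} [MeasurableSpace Ω] {P : Measure Ω} [IsProbabilityMeasure P] {ξ : Ω → ℝ}

theorem measure_le_eq_ofReal_one_sub_exp_neg (hξ : Measurable ξ)
    (hexp : ∀ t : ℝ, 0 ≤ t → P {ω | t < ξ ω} = ENNReal.ofReal (Real.exp (-t))) (c : ℝ) :
    P {ω | ξ ω ≤ c} = ENNReal.ofReal (1 - Real.exp (-c)) := by
  have hnonneg : ∀ c : ℝ, 0 ≤ c → P {ω | ξ ω ≤ c} = ENNReal.ofReal (1 - Real.exp (-c)) := by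
    intro c hc
    have hcompl : {ω | ξ ω ≤ c} = {ω | c < ξ ω}ᶜ := by ext; simp
    rw [hcompl, prob_compl_eq_one_sub (measurableSet_lt measurable_const hξ), hexp c hc,
      ← ENNReal.ofReal_one, ← ENNReal.ofReal_sub _ (Real.exp_nonneg _)]
  rcases le_or_gt 0 c with hc | hc
  · exact hnonneg c hc
  · have hzero : P {ω | ξ ω ≤ 0} = 0 := by simpa using hnonneg 0 le_rfl
    have hnull : P {ω | ξ ω ≤ c} = 0 :=
      measure_mono_null (fun ω (hω : ξ ω ≤ c) => (hω.trans hc.le : ξ ω ≤ 0)) hzero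
    rw [hnull, eq_comm, ENNReal.ofReal_eq_zero, sub_nonpos, Real.one_le_exp_iff]
    linarith

theorem map_exp_neg_eq_restrict_Ioc (hξ : Measurable ξ)
    (hexp : ∀ t : ℝ, 0 ≤ t → P {ω | t < ξ ω} = ENNReal.ofReal (Real.exp (-t))) :
    P.map (fun ω => Real.exp (-ξ ω)) = volume.restrict (Set.Ioc 0 1) := by
  refine Measure.ext_of_Ici _ _ fun t => ?_
  rw [Measure.map_apply (by fun_prop) measurableSet_Ici, Measure.restrict_apply measurableSet_Ici]
  rcases le_or_gt t 0 with ht | ht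
  · have hpre : (fun ω => Real.exp (-ξ ω)) ⁻¹' Set.Ici t = Set.univ :=
      Set.eq_univ_of_forall fun ω => ht.trans (Real.exp_pos _).le
    have hint : Set.Ici t ∩ Set.Ioc 0 1 = Set.Ioc 0 1 :=
      Set.inter_eq_right.2 fun u hu => ht.trans hu.1.le
    simp [hpre, hint]
  · have hpre : (fun ω => Real.exp (-ξ ω)) ⁻¹' Set.Ici t = {ω | ξ ω ≤ -Real.log t} := by
      ext ω
      simp [← Real.log_le_iff_le_exp ht, le_neg]
    have hint : Set.Ici t ∩ Set.Ioc 0 1 = Set.Icc t 1 := by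
      ext u
      simp only [Set.mem_inter_iff, Set.mem_Ici, Set.mem_Ioc, Set.mem_Icc]
      exact ⟨fun h => ⟨h.1, h.2.2⟩, fun h => ⟨h.1, ht.trans_le h.1, h.2⟩⟩
    rw [hpre, hint, measure_le_eq_ofReal_one_sub_exp_neg hξ hexp, neg_neg, Real.exp_log ht,
      Real.volume_Icc]

theorem integral_comp_exp_neg_eq_intervalIntegral (hξ : Measurable ξ)
    (hexp : ∀ t : ℝ, 0 ≤ t → P {ω | t < ξ ω} = ENNReal.ofReal (Real.exp (-t)))
    {g : ℝ → ℝ} (hg : Measurable g) :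
    ∫ ω, g (Real.exp (-ξ ω)) ∂P = ∫ u in (0 : ℝ)..1, g u := by
  rw [← integral_map (by fun_prop) hg.aestronglyMeasurable, map_exp_neg_eq_restrict_Ioc hξ hexp,
    intervalIntegral.integral_of_le zero_le_one]

end ExponentialLaw

noncomputable def survivalProduct (a u : ℝ) : ℝ :=
  ⨅ N : ℕ, ∏ x ∈ Finset.Icc 1 N, (1 - u * Real.exp (-(a * x)))

section SurvivalProduct

variable {a u : ℝ}

theorem measurable_survivalProduct (a : ℝ) : Measurable (survivalProduct a) :=
  Measurable.iInf fun N => Finset.measurable_prod _ fun x _ => by fun_prop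

theorem mul_exp_neg_mul_le_one (ha : 0 ≤ a) (hu : u ≤ 1) (x : ℕ) :
    u * Real.exp (-(a * x)) ≤ 1 := by
  have : Real.exp (-(a * x)) ≤ 1 := Real.exp_le_one_iff.2 (by simp only [neg_nonpos]; positivity)
  nlinarith [Real.exp_pos (-(a * x))]

theorem tendsto_sum_Icc_one_mul_exp_neg_mul (ha : 0 < a) (u : ℝ) :
    Tendsto (fun N : ℕ => ∑ x ∈ Finset.Icc 1 N, u * Real.exp (-(a * x))) atTop
      (𝓝 (u / (Real.exp a - 1))) :=
  tendsto_sum_Icc_one_of_hasSum ((hasSum_exp_neg_mul_succ ha).mul_left u)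

theorem one_sub_div_le_survivalProduct (ha : 0 < a) (hu : u ∈ Set.Icc 0 1) :
    1 - u / (Real.exp a - 1) ≤ survivalProduct a u :=
  one_sub_le_iInf_prod_Icc_one_sub (fun _ => mul_nonneg hu.1 (Real.exp_pos _).le)
    (mul_exp_neg_mul_le_one ha.le hu.2) (tendsto_sum_Icc_one_mul_exp_neg_mul ha u)

theorem survivalProduct_le_exp_neg_div (ha : 0 < a) (hu : u ≤ 1) :
    survivalProduct a u ≤ Real.exp (-(u / (Real.exp a - 1))) :=
  iInf_prod_Icc_one_sub_le_exp_neg (mul_exp_neg_mul_le_one ha.le hu)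
    (tendsto_sum_Icc_one_mul_exp_neg_mul ha u)

theorem intervalIntegrable_survivalProduct (ha : 0 < a) :
    IntervalIntegrable (survivalProduct a) volume 0 1 := by
  rw [intervalIntegrable_iff_integrableOn_Ioc_of_le zero_le_one]
  exact integrable_of_le_of_le (measurable_survivalProduct a).aestronglyMeasurable
    (ae_restrict_of_forall_mem measurableSet_Ioc fun u hu =>
      one_sub_div_le_survivalProduct ha (Set.Ioc_subset_Icc_self hu))
    (ae_restrict_of_forall_mem measurableSet_Ioc fun u hu =>
      survivalProduct_le_exp_neg_div ha hu.2)
    (by fun_prop : Continuous fun u => 1 - u / (Real.exp a - 1)).integrableOn_Ioc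
    (by fun_prop : Continuous fun u => Real.exp (-(u / (Real.exp a - 1)))).integrableOn_Ioc

end SurvivalProduct

/-- Let `a > 0`, `μ = e^a − 1`, and `ξ` exponential of rate 1 (`P(ξ > t) = e^{−t}` for
`t ≥ 0`). Then `1 − 1/(2μ) ≤ E[∏_{x=1}^∞ (1 − e^{−ξ−ax})] ≤ μ(1 − e^{−1/μ})`.
For each realization, the partial products are nonincreasing and bounded below, so the
infinite product equals the infimum of the partial products. -/
theorem stmt_5 {Ω : Type*} [MeasureSpace Ω] [IsProbabilityMeasure (ℙ : Measure Ω)]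
    (a : ℝ) (ha : 0 < a) (μ : ℝ) (hμ : μ = Real.exp a - 1)
    (ξ : Ω → ℝ) (hmeas : Measurable ξ)
    (hexp : ∀ t : ℝ, 0 ≤ t → ℙ {ω | t < ξ ω} = ENNReal.ofReal (Real.exp (-t))) :
    1 - 1 / (2 * μ) ≤
        ∫ ω, (⨅ N : ℕ, ∏ x ∈ Finset.Icc 1 N, (1 - Real.exp (-ξ ω - a * x))) ∂ℙ ∧
      ∫ ω, (⨅ N : ℕ, ∏ x ∈ Finset.Icc 1 N, (1 - Real.exp (-ξ ω - a * x))) ∂ℙ ≤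
        μ * (1 - Real.exp (-1 / μ)) := by
  have hμ0 : μ ≠ 0 := hμ ▸ (sub_pos.2 (Real.one_lt_exp_iff.2 ha)).ne'
  have hE : ∫ ω, (⨅ N : ℕ, ∏ x ∈ Finset.Icc 1 N, (1 - Real.exp (-ξ ω - a * x))) ∂ℙ =
      ∫ u in (0 : ℝ)..1, survivalProduct a u := by
    simp_rw [← integral_comp_exp_neg_eq_intervalIntegral hmeas hexp (measurable_survivalProduct a),
      survivalProduct, ← Real.exp_add, ← sub_eq_add_neg]
  rw [hE]
  subst hμ
  constructor
  · calc 1 - 1 / (2 * (Real.exp a - 1)) = ∫ u in (0 : ℝ)..1, (1 - u / (Real.exp a - 1)) := by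
          simp [intervalIntegral.integral_div]
          ring
      _ ≤ _ := intervalIntegral.integral_mono_on zero_le_one
          ((by fun_prop : Continuous _).intervalIntegrable _ _)
          (intervalIntegrable_survivalProduct ha) fun u hu => one_sub_div_le_survivalProduct ha hu
  · calc ∫ u in (0 : ℝ)..1, survivalProduct a u
        ≤ ∫ u in (0 : ℝ)..1, Real.exp (-(u / (Real.exp a - 1))) :=
          intervalIntegral.integral_mono_on zero_le_one (intervalIntegrable_survivalProduct ha)
            ((by fun_prop : Continuous _).intervalIntegrable _ _)
            fun u hu => survivalProduct_le_exp_neg_div ha hu.2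
      _ = _ := by
          rw [intervalIntegral.integral_comp_div (fun x => Real.exp (-x)) hμ0]
          simp [neg_div]
end
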